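/- arXiv:1110.5666 — 8 statements merged into one kernel-verified Lean document; each statement's English description precedes it below -/
import Mathlib

section
/- The sum over k from 0 to 2g+2 of 2^k(2^k-1) * binomial(2g+2, k) * B_k equals 0, where B_k are the Bernoulli numbers (with B_1 = -1/2). -/
/-!
Writing `B(t) = t / (e^t - 1)`, the sum is `n!` times the coefficient of `t^n`, `n = 2g + 2`, in
`(B(4t) - B(2t)) e^t`. From `B(at) (e^{at} - 1) = at` one gets `(B(4t) - B(2t)) (e^{2t} + 1) = -2t`,
so this series is `-2t e^t / (e^{2t} + 1) = -t / cosh t`, an odd function, whose even coefficients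
vanish.
-/

open PowerSeries Finset Nat

namespace PowerSeries

theorem coeff_eq_zero_of_evalNegHom_eq_neg {A : Type*} [CommRing A] [IsAddTorsionFree A]
    {f : A⟦X⟧} (hf : evalNegHom f = -f) {n : ℕ} (hn : Even n) : coeff n f = 0 := by
  have h := congrArg (coeff n) hf
  rwa [evalNegHom, coeff_rescale, hn.neg_one_pow, one_mul, map_neg, self_eq_neg] at h

theorem evalNegHom_evalNegHom {A : Type*} [CommRing A] (f : A⟦X⟧) :
    evalNegHom (evalNegHom f) = f := by
  simp [evalNegHom, rescale_rescale]

theorem evalNegHom_eq_neg_of_mul_eq_X_mul {A : Type*} [CommRing A] [IsDomain A]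
    {f g e : A⟦X⟧} (hg : evalNegHom g = g) (he : evalNegHom e = e) (hg0 : g ≠ 0)
    (hfg : f * g = X * e) : evalNegHom f = -f := by
  refine mul_right_cancel₀ hg0 ?_
  have h := congrArg evalNegHom hfg
  rw [map_mul, map_mul, hg, he, evalNegHom_X] at h
  rw [h, neg_mul, neg_mul, hfg]

section Bernoulli

variable {A : Type*} [CommRing A] [Algebra ℚ A]

theorem rescale_bernoulliPowerSeries_mul_exp_pow_sub_one (n : ℕ) :
    rescale (n : A) (bernoulliPowerSeries A) * (exp A ^ n - 1) = C (n : A) * X := by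
  rw [exp_pow_eq_rescale_exp, ← map_one (rescale (n : A)), ← map_sub, ← map_mul,
    bernoulliPowerSeries_mul_exp_sub_one, rescale_X]

theorem exp_pow_sub_one_ne_zero [Nontrivial A] {n : ℕ} (hn : n ≠ 0) : exp A ^ n - 1 ≠ 0 := by
  intro h
  have h1 := congrArg (coeff 1) h
  rw [exp_pow_eq_rescale_exp, map_sub, coeff_rescale, coeff_exp, coeff_one, map_zero] at h1
  have := Algebra.charZero_of_charZero ℚ A
  simp_all

theorem exp_add_evalNegHom_exp_ne_zero [Nontrivial A] : exp A + evalNegHom (exp A) ≠ 0 := by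
  intro h
  have h0 := congrArg (coeff 0) h
  rw [map_add, map_zero, evalNegHom, coeff_rescale, pow_zero, one_mul, ← two_mul, coeff_exp] at h0
  have := Algebra.charZero_of_charZero ℚ A
  simp at h0

theorem rescale_four_sub_rescale_two_bernoulliPowerSeries_mul [IsDomain A] :
    (rescale 4 (bernoulliPowerSeries A) - rescale 2 (bernoulliPowerSeries A)) * (exp A ^ 2 + 1) =
      -(2 * X) := by
  refine mul_right_cancel₀ (exp_pow_sub_one_ne_zero (A := A) two_ne_zero) ?_
  have h4 := rescale_bernoulliPowerSeries_mul_exp_pow_sub_one (A := A) 4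
  have h2 := rescale_bernoulliPowerSeries_mul_exp_pow_sub_one (A := A) 2
  simp only [Nat.cast_ofNat, map_ofNat] at h4 h2
  linear_combination h4 - (exp A ^ 2 + 1) * h2

theorem evalNegHom_rescale_four_sub_rescale_two_bernoulliPowerSeries_mul_exp [IsDomain A] :
    evalNegHom ((rescale 4 (bernoulliPowerSeries A) - rescale 2 (bernoulliPowerSeries A)) * exp A) =
      -((rescale 4 (bernoulliPowerSeries A) - rescale 2 (bernoulliPowerSeries A)) * exp A) := by
  refine evalNegHom_eq_neg_of_mul_eq_X_mul (g := exp A + evalNegHom (exp A)) (e := -2)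
    ?_ (by rw [map_neg, map_ofNat]) exp_add_evalNegHom_exp_ne_zero ?_
  · rw [map_add, evalNegHom_evalNegHom, add_comm]
  · linear_combination
      (rescale 4 (bernoulliPowerSeries A) - rescale 2 (bernoulliPowerSeries A)) *
        exp_mul_exp_neg_eq_one (A := A) +
      rescale_four_sub_rescale_two_bernoulliPowerSeries_mul (A := A)

end Bernoulli

theorem coeff_rescale_bernoulliPowerSeries_mul_exp (a : ℚ) (n : ℕ) :
    coeff n (rescale a (bernoulliPowerSeries ℚ) * exp ℚ) * n ! =
      ∑ k ∈ range (n + 1), a ^ k * n.choose k * bernoulli k := by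
  rw [coeff_mul, Finset.Nat.sum_antidiagonal_eq_sum_range_succ_mk, sum_mul]
  refine sum_congr rfl fun k hk => ?_
  have hkn : k ≤ n := Nat.lt_succ_iff.mp (mem_range.mp hk)
  simp only [coeff_rescale, bernoulliPowerSeries, coeff_mk, coeff_exp, Algebra.algebraMap_self,
    RingHom.id_apply, Nat.cast_choose ℚ hkn]
  field_simp

end PowerSeries

theorem bernoulli_identity (g : ℕ) :
    ∑ k ∈ Finset.range (2 * g + 3),
      (2 : ℚ) ^ k * ((2 : ℚ) ^ k - 1) * (Nat.choose (2 * g + 2) k : ℚ) * bernoulli k = 0 := by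
  have hcoeff := coeff_eq_zero_of_evalNegHom_eq_neg
    (evalNegHom_rescale_four_sub_rescale_two_bernoulliPowerSeries_mul_exp (A := ℚ))
    (n := 2 * g + 2) ⟨g + 1, by ring⟩
  rw [sub_mul, map_sub] at hcoeff
  calc _ = ∑ k ∈ range (2 * g + 2 + 1), (4 : ℚ) ^ k * (2 * g + 2).choose k * bernoulli k
        - ∑ k ∈ range (2 * g + 2 + 1), (2 : ℚ) ^ k * (2 * g + 2).choose k * bernoulli k := by
        rw [← sum_sub_distrib]
        refine sum_congr rfl fun k _ => ?_
        rw [show (4 : ℚ) = 2 * 2 by norm_num, mul_pow]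
        ring
    _ = 0 := by
        rw [← coeff_rescale_bernoulliPowerSeries_mul_exp,
          ← coeff_rescale_bernoulliPowerSeries_mul_exp, ← sub_mul, hcoeff, zero_mul]
end

section
/- Let p = 2d+1 and let c1 >= c2 be integers with 0 <= c2 <= c1 <= d-1. Then the number of pairs (a,b) of integers satisfying: 0 <= b <= d-a-1, c1-c2 <= a <= min(c1+c2, 2d-1-c1-c2), and a ≡ c1-c2 (mod 2), equals (c2+1)(d-c1). -/
/-!
Write `e = c₁ - c₂` and `N = min (c₂ + 1) (d - c₁)`. The admissible stick colours are exactly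
`a = e + 2k` for `k < N` (the bound `a ≤ c₁ + c₂` gives `k ≤ c₂`, the bound `a ≤ 2d - 1 - c₁ - c₂`
gives `k ≤ d - 1 - c₁`), and each admits the `d - a` values `b < d - a`. The count is therefore
the arithmetic sum `∑_{k<N} (d - e - 2k) = N (d - e + 1 - N)`, and `d - e + 1 - N` is the other
factor `max (c₂ + 1) (d - c₁)`.
-/

open Finset

theorem Nat.sum_range_sub_two_mul (n C : ℕ) (h : 2 * n ≤ C + 2) :
    ∑ k ∈ range n, (C - 2 * k) = n * (C + 1 - n) := by
  induction n with
  | zero => simp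
  | succ n ih =>
    rw [sum_range_succ, ih (by omega)]
    obtain ⟨m, rfl⟩ : ∃ m, C = 2 * n + m := ⟨C - 2 * n, by omega⟩
    rw [show 2 * n + m + 1 - n = n + m + 1 by omega, show 2 * n + m - 2 * n = m by omega,
      show 2 * n + m + 1 - (n + 1) = n + m by omega]
    ring

theorem card_filter_range_product_add_lt (d : ℕ) (P : ℕ → Prop) [DecidablePred P] :
    #((range d ×ˢ range d).filter fun ab : ℕ × ℕ => ab.1 + ab.2 + 1 ≤ d ∧ P ab.1) =
      ∑ a ∈ (range d).filter P, (d - a) := by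
  rw [card_filter, sum_product, sum_filter]
  refine sum_congr rfl fun a _ => ?_
  by_cases hP : P a
  · have hb : (range d).filter (fun b => a + b + 1 ≤ d) = range (d - a) := by
      ext b; simp only [mem_filter, mem_range]; omega
    simp only [hP, and_true, if_true, ← card_filter, hb, card_range]
  · simp [hP]

theorem filter_stick_colors_eq_image (d c1 c2 : ℕ) (h21 : c2 ≤ c1) (h1d : c1 ≤ d - 1) :
    (range d).filter (fun a => c1 - c2 ≤ a ∧ a ≤ min (c1 + c2) (2 * d - 1 - c1 - c2) ∧
        a % 2 = (c1 - c2) % 2) =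
      (range (min (c2 + 1) (d - c1))).image fun k => c1 - c2 + 2 * k := by
  ext a
  simp only [mem_filter, mem_range, mem_image]
  constructor
  · intro h
    exact ⟨(a - (c1 - c2)) / 2, by omega, by omega⟩
  · rintro ⟨k, hk, rfl⟩
    omega

theorem balanced_count_general (d c1 c2 : ℕ) (h21 : c2 ≤ c1) (h1d : c1 ≤ d - 1) :
    ((Finset.range d ×ˢ Finset.range d).filter (fun ab : ℕ × ℕ =>
        ab.1 + ab.2 + 1 ≤ d ∧
        c1 - c2 ≤ ab.1 ∧ ab.1 ≤ min (c1 + c2) (2 * d - 1 - c1 - c2) ∧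
        ab.1 % 2 = (c1 - c2) % 2)).card = (c2 + 1) * (d - c1) := by
  set N := min (c2 + 1) (d - c1)
  have hsum : ∑ k ∈ range N, (d - (c1 - c2 + 2 * k)) = N * (d - (c1 - c2) + 1 - N) := by
    rw [← Nat.sum_range_sub_two_mul N (d - (c1 - c2)) (by omega)]
    exact sum_congr rfl fun k _ => by omega
  refine (card_filter_range_product_add_lt d fun a => c1 - c2 ≤ a ∧
    a ≤ min (c1 + c2) (2 * d - 1 - c1 - c2) ∧ a % 2 = (c1 - c2) % 2).trans ?_
  rw [filter_stick_colors_eq_image d c1 c2 h21 h1d, sum_image fun _ _ _ _ h => by omega, hsum,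
    show d - (c1 - c2) + 1 - N = max (c2 + 1) (d - c1) by omega, min_mul_max]

/-- The number of balanced colorings `β(c₁,c₂)` of the genus-one lollipop tree with two
boundary colors `2c₁`, `2c₂` equals `(c₂+1)(d-c₁)`.  A coloring is a pair `(a,b)` with
`0 ≤ b ≤ d-a-1`, `c₁-c₂ ≤ a ≤ min (c₁+c₂) (2d-1-c₁-c₂)` and `a ≡ c₁-c₂ (mod 2)`. -/
theorem balanced_count (d c1 c2 : ℕ) (hd : 2 ≤ d) (h21 : c2 ≤ c1) (h1d : c1 ≤ d - 1) :
    ((Finset.range d ×ˢ Finset.range d).filter (fun ab : ℕ × ℕ =>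
        ab.1 + ab.2 + 1 ≤ d ∧
        c1 - c2 ≤ ab.1 ∧ ab.1 ≤ min (c1 + c2) (2 * d - 1 - c1 - c2) ∧
        ab.1 % 2 = (c1 - c2) % 2)).card = (c2 + 1) * (d - c1) :=
  balanced_count_general d c1 c2 h21 h1d
end

section
/- Let p = 2d+1 and let c1 >= c2 be integers with 0 <= c2 <= c1 <= d-1. Then the number of pairs (a,b) of integers satisfying: 0 <= b <= d-a-1, c1-c2 <= a <= min(c1+c2, 2d-1-c1-c2), and a ≡ c1-c2+1 (mod 2), equals c2(d-c1). -/
/-!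
Sum over the first coordinate `a`: it admits exactly `d - a` values of `b`. The admissible `a`
form the progression `c₁ - c₂ + 1 + 2k` with `k < min c₂ (d - c₁)`, so the count is
`∑_{k < m} (c₂ + (d - c₁) - 1 - 2k)` with `m = min c₂ (d - c₁)`, which equals
`m (c₂ + (d - c₁) - m) = min · max = c₂ (d - c₁)`.
-/

open Finset

lemma sum_range_sub_one_sub_two_mul {m n : ℕ} (h : 2 * m ≤ n) :
    ∑ k ∈ range m, (n - 1 - 2 * k) = m * (n - m) := by
  induction m with
  | zero => simp
  | succ m ih =>
    rw [sum_range_succ, ih (by omega)]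
    obtain ⟨r, rfl⟩ := Nat.exists_eq_add_of_le h
    have h₁ : 2 * (m + 1) + r - m = m + 2 + r := by omega
    have h₂ : 2 * (m + 1) + r - 1 - 2 * m = 1 + r := by omega
    have h₃ : 2 * (m + 1) + r - (m + 1) = m + 1 + r := by omega
    rw [h₁, h₂, h₃]
    ring

lemma sum_range_min_add_sub_one_sub_two_mul (x y : ℕ) :
    ∑ k ∈ range (min x y), (x + y - 1 - 2 * k) = x * y := by
  rw [sum_range_sub_one_sub_two_mul (by omega), ← min_mul_max x y, ← min_add_max x y,
    Nat.add_sub_cancel_left]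

lemma card_filter_range_product_add_lt_and (d : ℕ) (P : ℕ → Prop) [DecidablePred P] :
    ((range d ×ˢ range d).filter (fun ab : ℕ × ℕ => ab.1 + ab.2 + 1 ≤ d ∧ P ab.1)).card =
      ∑ a ∈ (range d).filter P, (d - a) := by
  rw [card_filter, sum_product, sum_filter]
  refine sum_congr rfl fun a _ => ?_
  split_ifs with hP
  · simp only [hP, and_true, ← card_filter]
    have hb : (range d).filter (fun b => a + b + 1 ≤ d) = range (d - a) := by
      ext b
      simp only [mem_filter, mem_range]
      omega
    rw [hb, card_range]
  · simp [hP]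

lemma filter_unbalanced_eq_image {d c1 c2 : ℕ} (h21 : c2 ≤ c1) :
    (range d).filter (fun a => c1 - c2 ≤ a ∧ a ≤ min (c1 + c2) (2 * d - 1 - c1 - c2) ∧
        a % 2 = (c1 - c2 + 1) % 2) =
      (range (min c2 (d - c1))).image (fun k => c1 - c2 + 1 + 2 * k) := by
  ext a
  simp only [mem_filter, mem_range, mem_image]
  constructor
  · rintro ⟨-, h⟩
    exact ⟨(a - (c1 - c2 + 1)) / 2, by omega, by omega⟩
  · rintro ⟨k, hk, rfl⟩
    omega

theorem unbalanced_count_general (d c1 c2 : ℕ) (h21 : c2 ≤ c1) (h1d : c1 ≤ d - 1) :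
    ((Finset.range d ×ˢ Finset.range d).filter (fun ab : ℕ × ℕ =>
        ab.1 + ab.2 + 1 ≤ d ∧
        c1 - c2 ≤ ab.1 ∧ ab.1 ≤ min (c1 + c2) (2 * d - 1 - c1 - c2) ∧
        ab.1 % 2 = (c1 - c2 + 1) % 2)).card = c2 * (d - c1) := by
  rw [card_filter_range_product_add_lt_and d fun a => c1 - c2 ≤ a ∧
      a ≤ min (c1 + c2) (2 * d - 1 - c1 - c2) ∧ a % 2 = (c1 - c2 + 1) % 2,
    filter_unbalanced_eq_image h21,
    sum_image fun _ _ _ _ h => by omega, ← sum_range_min_add_sub_one_sub_two_mul]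
  exact sum_congr rfl fun k _ => by omega

/-- The number of unbalanced colorings `η(c₁,c₂)` of the genus-one lollipop tree with two
boundary colors `2c₁`, `2c₂` equals `c₂(d-c₁)`.  A coloring is a pair `(a,b)` with
`0 ≤ b ≤ d-a-1`, `c₁-c₂ ≤ a ≤ min (c₁+c₂) (2d-1-c₁-c₂)` and `a ≡ c₁-c₂+1 (mod 2)`. -/
theorem unbalanced_count (d c1 c2 : ℕ) (hd : 2 ≤ d) (h21 : c2 ≤ c1) (h1d : c1 ≤ d - 1) :
    ((Finset.range d ×ˢ Finset.range d).filter (fun ab : ℕ × ℕ =>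
        ab.1 + ab.2 + 1 ≤ d ∧
        c1 - c2 ≤ ab.1 ∧ ab.1 ≤ min (c1 + c2) (2 * d - 1 - c1 - c2) ∧
        ab.1 % 2 = (c1 - c2 + 1) % 2)).card = c2 * (d - c1) :=
  unbalanced_count_general d c1 c2 h21 h1d
end

section
/- Define delta_g^{(2c)} recursively by delta_1^{(2c)} = d - c for 0 <= c <= d-1, and delta_{g+1}^{(2c)} = sum_{a=0}^{d-1} (d - max(a,c)) * delta_g^{(2a)}. Then delta_2^{(2c)} = (p^3 - (6c^2+6c+1)p + 4c^3 + 6c^2 + 2c)/24, where p = 2d+1. -/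
/-- `delta d g c` is `δ_g^{(2c)}` for `p = 2d+1`, with `δ_0^{(0)} = 1`, `δ_0^{(2c)} = 0` for
`c ≠ 0`, and `δ_{g+1}^{(2c)} = ∑_{a=0}^{d-1} (d - max a c) δ_g^{(2a)}`; in particular
`δ_1^{(2c)} = d - c`. -/
def delta (d : ℕ) : ℕ → ℕ → ℚ
  | 0, c => if c = 0 then 1 else 0
  | g + 1, c => ∑ a ∈ Finset.range d, ((d : ℚ) - max a c) * delta d g a

/-!
With `δ_1^{(2a)} = d - a`, the term of `δ_2^{(2c)}` indexed by `a` is `(d - c)(d - a)` for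
`a < c` and `(d - a)^2` for `a ≥ c`, so `δ_2^{(2c)}` is a combination of the power sums
`∑ (x - i)` and `∑ (x - i)^2` over initial segments, whose closed forms give the polynomial.
-/

open Finset

section PowerSums

variable {K : Type*} [Field K] [CharZero K]

theorem sum_range_sub_natCast (n : ℕ) (x : K) :
    ∑ i ∈ range n, (x - i) = n * x - n * (n - 1) / 2 := by
  induction n with
  | zero => simp
  | succ n ih => rw [sum_range_succ, ih]; push_cast; ring

theorem sum_range_sub_natCast_sq (n : ℕ) (x : K) :
    ∑ i ∈ range n, (x - i) ^ 2 = n * x ^ 2 - n * (n - 1) * x + n * (n - 1) * (2 * n - 1) / 6 := by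
  induction n with
  | zero => simp
  | succ n ih => rw [sum_range_succ, ih]; push_cast; ring

end PowerSums

theorem delta_one {d : ℕ} (hd : 0 < d) (a : ℕ) : delta d 1 a = d - a := by
  rw [delta, sum_eq_single_of_mem 0 (mem_range.2 hd) fun b _ hb => by simp [delta, hb]]
  simp [delta]

theorem delta_two_eq_sum {d : ℕ} (hd : 0 < d) (c : ℕ) :
    delta d 2 c = ∑ a ∈ range d, ((d : ℚ) - max a c) * (d - a) := by
  rw [delta]
  simp only [delta_one hd]

theorem delta_two_eq_power_sums {d c : ℕ} (hc : c < d) :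
    delta d 2 c = (d - c) * ∑ a ∈ range c, ((d : ℚ) - a)
      + (∑ a ∈ range d, ((d : ℚ) - a) ^ 2 - ∑ a ∈ range c, ((d : ℚ) - a) ^ 2) := by
  have below : ∀ a ∈ range c, ((d : ℚ) - max a c) * (d - a) = (d - c) * (d - a) := by
    intro a ha
    rw [max_eq_right (mem_range.1 ha).le]
  have above : ∀ a ∈ Ico c d, ((d : ℚ) - max a c) * (d - a) = (d - a) ^ 2 := by
    intro a ha
    rw [max_eq_left (mem_Ico.1 ha).1]
    ring
  rw [delta_two_eq_sum (c.zero_le.trans_lt hc), ← sum_range_add_sum_Ico _ hc.le,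
    sum_congr rfl below, sum_congr rfl above, ← mul_sum, sum_Ico_eq_sub _ hc.le]

theorem delta_two_general (d c : ℕ) (hc : c < d) :
    delta d 2 c =
      ((2 * (d : ℚ) + 1) ^ 3 - (6 * (c : ℚ) ^ 2 + 6 * c + 1) * (2 * (d : ℚ) + 1)
        + 4 * (c : ℚ) ^ 3 + 6 * (c : ℚ) ^ 2 + 2 * c) / 24 := by
  rw [delta_two_eq_power_sums hc, sum_range_sub_natCast, sum_range_sub_natCast_sq,
    sum_range_sub_natCast_sq]
  ring

theorem delta_two (d c : ℕ) (hd : 1 ≤ d) (hc : c < d) :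
    delta d 2 c =
      ((2 * (d : ℚ) + 1) ^ 3 - (6 * (c : ℚ) ^ 2 + 6 * c + 1) * (2 * (d : ℚ) + 1)
        + 4 * (c : ℚ) ^ 3 + 6 * (c : ℚ) ^ 2 + 2 * c) / 24 :=
  delta_two_general d c hc
end

section
/- With delta_g^{(2c)} defined by delta_1^{(2c)} = d-c and delta_{g+1}^{(2c)} = sum_{a=0}^{d-1}(d - max(a,c)) delta_g^{(2a)}, and with p = 2d+1, one has delta_4^{(0)} = (p-1)p(p+1)(17p^4 + 31p^2 + 24)/40320. -/
open Finset

lemma sum_range_sub_max_mul (f : ℕ → ℚ) {c d : ℕ} (hc : c ≤ d) :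
    ∑ a ∈ range d, ((d : ℚ) - max a c) * f a
      = ((d : ℚ) - c) * ∑ a ∈ range c, f a + ∑ a ∈ Ico c d, ((d : ℚ) - a) * f a := by
  rw [range_eq_Ico, ← sum_Ico_consecutive _ (Nat.zero_le c) hc, ← range_eq_Ico, mul_sum]
  congr 1
  · exact sum_congr rfl fun a ha => by rw [max_eq_right (mem_range.mp ha).le]
  · exact sum_congr rfl fun a ha => by rw [max_eq_left (mem_Ico.mp ha).1]

lemma sum_range_sq_mul_sub_sq_sq (A : ℚ) (m : ℕ) :
    ∑ n ∈ range m, (((n : ℚ) + 1) * (A - ((n : ℚ) + 1) ^ 2)) ^ 2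
      = A ^ 2 * (m * (m + 1) * (2 * m + 1) / 6)
        - 2 * A * (m * (m + 1) * (2 * m + 1) * (3 * m ^ 2 + 3 * m - 1) / 30)
        + m * (m + 1) * (2 * m + 1) * (3 * m ^ 4 + 6 * m ^ 3 - 3 * m + 1) / 42 := by
  induction m with
  | zero => simp
  | succ m ih => rw [sum_range_succ, ih]; push_cast; ring

namespace delta

variable {d : ℕ}

lemma sum_succ_mul_eq_sum_mul_succ (g h : ℕ) :
    ∑ a ∈ range d, delta d (g + 1) a * delta d h a
      = ∑ a ∈ range d, delta d g a * delta d (h + 1) a := by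
  simp only [delta, sum_mul, mul_sum]
  rw [sum_comm]
  refine sum_congr rfl fun a _ => sum_congr rfl fun b _ => ?_
  rw [max_comm]
  ring

lemma sum_add_mul_eq_sum_mul_add (g h k : ℕ) :
    ∑ a ∈ range d, delta d (g + k) a * delta d h a
      = ∑ a ∈ range d, delta d g a * delta d (h + k) a := by
  induction k generalizing h with
  | zero => rfl
  | succ k ih => rw [← add_assoc, sum_succ_mul_eq_sum_mul_succ, ih, add_right_comm h 1 k]; rfl

lemma sum_mul_zero (hd : 1 ≤ d) (f : ℕ → ℚ) :
    ∑ a ∈ range d, f a * delta d 0 a = f 0 := by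
  rw [sum_eq_single_of_mem 0 (mem_range.mpr hd) fun a _ ha => by simp [delta, ha]]
  simp [delta]

lemma add_apply_zero (hd : 1 ≤ d) (g h : ℕ) :
    delta d (g + h) 0 = ∑ a ∈ range d, delta d g a * delta d h a := by
  rw [← sum_mul_zero hd (delta d (g + h)), sum_add_mul_eq_sum_mul_add, zero_add]

lemma one_apply (hd : 1 ≤ d) (c : ℕ) : delta d 1 c = d - c := by
  rw [delta, sum_mul_zero hd]
  simp

lemma two_apply_sub (hd : 1 ≤ d) {n : ℕ} (hn : n ≤ d) :
    delta d 2 (d - n) = n * (3 * d * (d + 1) + 1 - n ^ 2) / 6 := by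
  have hc : d - n ≤ d := Nat.sub_le d n
  have sum_lin (m : ℕ) : ∑ a ∈ range m, ((d : ℚ) - a) = m * d - m * (m - 1) / 2 := by
    induction m with
    | zero => simp
    | succ m ih => rw [sum_range_succ, ih]; push_cast; ring
  have sum_sq (m : ℕ) :
      ∑ a ∈ range m, ((d : ℚ) - a) * (d - a) = m * d ^ 2 - d * m * (m - 1)
        + (m - 1) * m * (2 * m - 1) / 6 := by
    induction m with
    | zero => simp
    | succ m ih => rw [sum_range_succ, ih]; push_cast; ring
  rw [delta, sum_congr rfl fun a _ => by rw [one_apply hd], sum_range_sub_max_mul _ hc,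
    sum_Ico_eq_sub _ hc, sum_lin, sum_sq, sum_sq, Nat.cast_sub hn]
  ring

lemma sum_two_mul_two (hd : 1 ≤ d) :
    ∑ c ∈ range d, delta d 2 c * delta d 2 c
      = ∑ n ∈ range d, (((n : ℚ) + 1) * ((3 * d * (d + 1) + 1) - ((n : ℚ) + 1) ^ 2)) ^ 2 / 36 := by
  rw [← sum_range_reflect]
  refine sum_congr rfl fun n hn => ?_
  rw [Nat.sub_sub, add_comm, two_apply_sub hd (mem_range.mp hn)]
  push_cast
  ring

end delta

theorem delta_four (d : ℕ) (hd : 1 ≤ d) (p : ℚ) (hp : p = 2 * d + 1) :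
    delta d 4 0 = (p - 1) * p * (p + 1) * (17 * p ^ 4 + 31 * p ^ 2 + 24) / 40320 := by
  rw [show 4 = 2 + 2 from rfl, delta.add_apply_zero hd, delta.sum_two_mul_two hd, ← sum_div,
    sum_range_sq_mul_sub_sq_sq, hp]
  ring
end

section
/- Let p = 2d+1 >= 5 be an odd prime and q a primitive p-th root of unity in the complex numbers. Let S be the d x d matrix with entries S_{ij} = q^{(2i+1)(2j+1)} - q^{-(2i+1)(2j+1)} for 0 <= i,j <= d-1. Then S^{-1} = -(1/p) S, i.e. S^2 = -p times the identity matrix. -/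
open Finset

private lemma sum_split (z : ℂ) (d : ℕ) :
    ∑ r ∈ Finset.range (2 * d + 1), z ^ r
      = 1 + ∑ j ∈ Finset.range d, (z ^ (2 * j + 1) + z ^ (2 * j + 2)) := by
  induction d with
  | zero => simp
  | succ d ih =>
    have h : 2 * (d + 1) + 1 = (2 * d + 1) + 1 + 1 := by ring
    rw [h, Finset.sum_range_succ, Finset.sum_range_succ, ih, Finset.sum_range_succ]
    ring

private lemma key_sum (p d : ℕ) (hpd : p = 2 * d + 1)
    (q : ℂ) (hq : IsPrimitiveRoot q p) (m : ℤ) :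
    ∑ j ∈ Finset.range d, (q ^ (m * (2 * (j : ℤ) + 1)) + q ^ (-(m * (2 * (j : ℤ) + 1))))
      = if (p : ℤ) ∣ m then (p : ℂ) - 1 else -1 := by
  have hq0 : q ≠ 0 := by
    rintro rfl
    have := hq.pow_eq_one
    simp [hpd] at this
  set z : ℂ := q ^ m with hz
  have hzp : z ^ p = 1 := by
    rw [hz, ← zpow_natCast (q ^ m) p, ← zpow_mul, mul_comm, zpow_mul, hq.zpow_eq_one, one_zpow]
  have hz0 : z ≠ 0 := zpow_ne_zero _ hq0
  have hpd' : (p : ℤ) = 2 * (d : ℤ) + 1 := by exact_mod_cast hpd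
  have hterm : ∀ j ∈ Finset.range d,
      q ^ (m * (2 * (j : ℤ) + 1)) + q ^ (-(m * (2 * (j : ℤ) + 1)))
        = z ^ (2 * j + 1) + z ^ (2 * (d - j)) := by
    intro j hj
    rw [Finset.mem_range] at hj
    have h1 : q ^ (m * (2 * (j : ℤ) + 1)) = z ^ (2 * j + 1) := by
      rw [hz, ← zpow_natCast (q ^ m) (2 * j + 1), ← zpow_mul]
      congr 1
      all_goals push_cast; ring
    have h2 : q ^ (-(m * (2 * (j : ℤ) + 1))) = z ^ (2 * (d - j)) := by
      rw [← zpow_natCast z (2 * (d - j))]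
      have h4 : ((2 * (d - j) : ℕ) : ℤ) = -(2 * (j : ℤ) + 1) + p := by
        have hjd : ((j : ℤ)) < d := by exact_mod_cast hj
        push_cast [Nat.cast_sub hj.le]
        omega
      rw [h4, zpow_add₀ hz0, zpow_natCast, hzp, mul_one, hz, ← zpow_mul]
      congr 1
      all_goals ring
    rw [h1, h2]
  rw [Finset.sum_congr rfl hterm, Finset.sum_add_distrib]
  have hrefl : ∑ j ∈ Finset.range d, z ^ (2 * (d - j))
      = ∑ j ∈ Finset.range d, z ^ (2 * j + 2) := by
    rw [← Finset.sum_range_reflect (fun j => z ^ (2 * j + 2)) d]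
    apply Finset.sum_congr rfl
    intro j hj
    rw [Finset.mem_range] at hj
    congr 1
    omega
  rw [hrefl, ← Finset.sum_add_distrib]
  have hgeom : ∑ r ∈ Finset.range p, z ^ r
      = 1 + ∑ j ∈ Finset.range d, (z ^ (2 * j + 1) + z ^ (2 * j + 2)) := by
    rw [hpd]; exact sum_split z d
  by_cases hdvd : (p : ℤ) ∣ m
  · have hz1 : z = 1 := (hq.zpow_eq_one_iff_dvd m).mpr hdvd
    rw [if_pos hdvd]
    have hs : ∑ r ∈ Finset.range p, z ^ r = (p : ℂ) := by simp [hz1]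
    rw [hs] at hgeom
    linear_combination -1 * hgeom
  · have hz1 : z ≠ 1 := fun h => hdvd ((hq.zpow_eq_one_iff_dvd m).mp h)
    rw [if_neg hdvd]
    have hs : ∑ r ∈ Finset.range p, z ^ r = 0 := by
      rw [geom_sum_eq hz1, hzp]; simp
    rw [hs] at hgeom
    linear_combination -1 * hgeom

/-- For `p = 2d+1` an odd prime and `q` a primitive `p`-th root of unity, the `d × d`
matrix `S` with `S_{ij} = q^{(2i+1)(2j+1)} - q^{-(2i+1)(2j+1)}` satisfies
`S² = -p·1`, i.e. `S⁻¹ = -(1/p) S`. -/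
theorem S_matrix_inverse (p d : ℕ) (hp : p.Prime) (hpd : p = 2 * d + 1) (hp5 : 5 ≤ p)
    (q : ℂ) (hq : IsPrimitiveRoot q p)
    (S : Matrix (Fin d) (Fin d) ℂ)
    (hS : ∀ i j : Fin d, S i j =
      q ^ (((2 * (i : ℕ) + 1) * (2 * (j : ℕ) + 1) : ℕ) : ℤ)
        - q ^ (-(((2 * (i : ℕ) + 1) * (2 * (j : ℕ) + 1) : ℕ) : ℤ))) :
    S * S = (-(p : ℂ)) • (1 : Matrix (Fin d) (Fin d) ℂ) ∧
      S⁻¹ = (-(1 / (p : ℂ))) • S := by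
  have hq0 : q ≠ 0 := by
    rintro rfl
    have := hq.pow_eq_one
    simp [hpd] at this
  have hsq : S * S = (-(p : ℂ)) • (1 : Matrix (Fin d) (Fin d) ℂ) := by
    ext i k
    rw [Matrix.mul_apply, Matrix.smul_apply, Matrix.one_apply]
    set m₁ : ℤ := (2 * (i : ℕ) + 1) + (2 * (k : ℕ) + 1) with hm₁def
    set m₂ : ℤ := (2 * (i : ℕ) + 1) - (2 * (k : ℕ) + 1) with hm₂def
    have hterm : ∀ j : Fin d, S i j * S j k
        = (q ^ (m₁ * (2 * (j : ℤ) + 1)) + q ^ (-(m₁ * (2 * (j : ℤ) + 1))))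
          - (q ^ (m₂ * (2 * (j : ℤ) + 1)) + q ^ (-(m₂ * (2 * (j : ℤ) + 1)))) := by
      intro j
      rw [hS i j, hS j k]
      set A : ℤ := (((2 * (i : ℕ) + 1) * (2 * (j : ℕ) + 1) : ℕ) : ℤ) with hA
      set B : ℤ := (((2 * (j : ℕ) + 1) * (2 * (k : ℕ) + 1) : ℕ) : ℤ) with hB
      have e1 : m₁ * (2 * (j : ℤ) + 1) = A + B := by rw [hA, hB]; push_cast; ring
      have e2 : m₂ * (2 * (j : ℤ) + 1) = A - B := by rw [hA, hB]; push_cast; ring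
      rw [e1, e2, zpow_add₀ hq0, neg_add, zpow_add₀ hq0, zpow_sub₀ hq0, neg_sub,
        zpow_sub₀ hq0, zpow_neg, zpow_neg]
      have hA0 : q ^ A ≠ 0 := zpow_ne_zero _ hq0
      have hB0 : q ^ B ≠ 0 := zpow_ne_zero _ hq0
      field_simp
      ring
    rw [Finset.sum_congr rfl (fun j _ => hterm j), Finset.sum_sub_distrib]
    have hsum : ∀ m : ℤ, ∑ j : Fin d, (q ^ (m * (2 * (j : ℤ) + 1)) + q ^ (-(m * (2 * (j : ℤ) + 1))))
        = if (p : ℤ) ∣ m then (p : ℂ) - 1 else -1 := by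
      intro m
      rw [← key_sum p d hpd q hq m]
      exact Fin.sum_univ_eq_sum_range
        (fun j : ℕ => q ^ (m * (2 * (j : ℤ) + 1)) + q ^ (-(m * (2 * (j : ℤ) + 1)))) d
    rw [hsum m₁, hsum m₂]
    have hibound : ((i : ℕ) : ℤ) < d := by exact_mod_cast i.isLt
    have hkbound : ((k : ℕ) : ℤ) < d := by exact_mod_cast k.isLt
    have hpd' : (p : ℤ) = 2 * (d : ℤ) + 1 := by exact_mod_cast hpd
    have hm₁ : ¬ (p : ℤ) ∣ m₁ := by
      rintro ⟨c, hc⟩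
      have hppos : (0 : ℤ) < p := by exact_mod_cast hp.pos
      have hm₁pos : 0 < m₁ := by rw [hm₁def]; positivity
      have hm₁lt : m₁ < 2 * p := by rw [hm₁def]; omega
      have hc1 : c = 1 := by nlinarith
      rw [hc1, mul_one] at hc
      omega
    have hm₂ : (p : ℤ) ∣ m₂ ↔ i = k := by
      constructor
      · intro hdvd
        have habs : m₂.natAbs < ((p : ℤ)).natAbs := by
          rw [hm₂def]
          omega
        have h0 : m₂ = 0 := Int.eq_zero_of_dvd_of_natAbs_lt_natAbs hdvd habs
        have : (i : ℕ) = (k : ℕ) := by rw [hm₂def] at h0; omega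
        exact Fin.ext this
      · rintro rfl
        simp [hm₂def]
    by_cases hik : i = k
    · rw [if_neg hm₁, if_pos (hm₂.mpr hik), if_pos hik, smul_eq_mul, mul_one]; ring
    · rw [if_neg hm₁, if_neg (fun h => hik (hm₂.mp h)), if_neg hik, smul_eq_mul, mul_zero]; ring
  refine ⟨hsq, ?_⟩
  have hp0 : (p : ℂ) ≠ 0 := by exact_mod_cast hp.ne_zero
  apply Matrix.inv_eq_right_inv
  rw [Matrix.mul_smul, hsq, smul_smul]
  have h1 : (-(1 / (p : ℂ))) * (-(p : ℂ)) = 1 := by field_simp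
  rw [h1, one_smul]
end

section
/- Let p = 2d+1 be odd and define hat-K = sum_{n=0}^{d-1} (-1)^n (d-n) e_{2n} in the Verlinde algebra V_p = Q(zeta_p)[z]/(e_d - e_{d-1}), where indices are reduced using e_{d+i} = e_{d-1-i}. Then the matrix M of multiplication by hat-K in the basis {e_0, e_2, ..., e_{2d-2}} has entries M_{ji} = (-1)^{i+j} (d - max(i,j)). -/
/-!
Multiplication by `e₂` acts on the even classes by `e₂ e_{2j+2} = e_{2j+4} + e_{2j+2} + e_{2j}`
and `e₂ e₀ = e₂`, and `e_{2d} = (e_d - e_{d-1})(e_d + e_{d-1})` vanishes in `V_p`. Writing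
`R_i = ∑_j M_{ij} e_{2j}` for the rows of the claimed matrix, the identity
`M_{i+1,j} + M_{i+1,j+2} = M_{i+2,j+1} + M_{i,j+1}` together with `M_{i,d} = 0` shows that the
rows obey the same recurrence `e₂ R_{i+1} = R_{i+2} + R_{i+1} + R_i`, `e₂ R₀ = R₁` in `V_p`.
Since `R₀ = K̂` and `e₀ = 1`, induction on `i` gives `K̂ e_{2i} = R_i`.
-/

/-- Chebyshev polynomials of the second kind: `e 0 = 1`, `e 1 = z`,
`e (n+2) = z * e (n+1) - e n`. -/
noncomputable def cheb (K : Type*) [Field K] : ℕ → Polynomial K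
  | 0 => 1
  | 1 => Polynomial.X
  | n + 2 => Polynomial.X * cheb K (n + 1) - cheb K n

open Polynomial Finset

theorem mul_sum_range_succ_of_three_term {R : Type*} [CommRing R] {x : R} {f : ℕ → R}
    (hf₀ : x * f 0 = f 1) (hf : ∀ j, x * f (j + 1) = f (j + 2) + f (j + 1) + f j)
    {c c' : ℕ → R} (hc'₀ : c' 0 = c 1) (hc' : ∀ j, c' (j + 1) = c j + c (j + 1) + c (j + 2))
    (m : ℕ) :
    x * ∑ j ∈ range (m + 1), c j * f j
      = ∑ j ∈ range (m + 1), c' j * f j + (c m * f (m + 1) - c (m + 1) * f m) := by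
  induction m with
  | zero => simp only [zero_add, sum_range_one, hc'₀]; linear_combination c 0 * hf₀
  | succ m ih =>
    rw [sum_range_succ, mul_add, ih, sum_range_succ _ (m + 1), hc']
    linear_combination c (m + 1) * hf m

section Chebyshev

variable {K : Type*} [Field K]

theorem cheb_zero : cheb K 0 = 1 := rfl

theorem cheb_add_two (n : ℕ) : cheb K (n + 2) = X * cheb K (n + 1) - cheb K n := rfl

theorem cheb_add_add_two (m n : ℕ) :
    cheb K (m + n + 2) = cheb K (m + 1) * cheb K (n + 1) - cheb K m * cheb K n := by
  induction n using Nat.twoStepInduction with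
  | zero => rw [cheb_add_two]; simp [cheb]; ring
  | one => rw [cheb_add_two, cheb_add_two m]; simp [cheb]; ring
  | more n ih ih' =>
    rw [show m + (n + 1) + 2 = m + n + 2 + 1 by omega] at ih'
    rw [show m + (n + 2) + 2 = m + n + 2 + 2 by omega]
    linear_combination cheb_add_two (K := K) (m + n + 2) + X * ih' - ih
      - cheb K (m + 1) * cheb_add_two (K := K) (n + 1) + cheb K m * cheb_add_two (K := K) n

theorem cheb_two_mul_cheb_even_succ (j : ℕ) :
    cheb K 2 * cheb K (2 * (j + 1))
      = cheb K (2 * (j + 2)) + cheb K (2 * (j + 1)) + cheb K (2 * j) := by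
  have h₁ := cheb_add_two (K := K) (2 * j + 2)
  have h₂ := cheb_add_two (K := K) (2 * j + 1)
  have h₃ := cheb_add_two (K := K) (2 * j)
  have h₄ : cheb K 2 = X * X - 1 := by rw [cheb_add_two]; simp [cheb]
  rw [show 2 * (j + 2) = 2 * j + 2 + 2 by ring, show 2 * (j + 1) = 2 * j + 2 by ring]
  rw [show 2 * j + 2 + 1 = 2 * j + 1 + 2 by ring] at h₁
  linear_combination h₄ * cheb K (2 * j + 2) - h₁ - X * h₂ - h₃

theorem cheb_even_succ_mem_span (m : ℕ) :
    cheb K (2 * (m + 1)) ∈ Ideal.span {cheb K (m + 1) - cheb K m} := by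
  refine Ideal.mem_span_singleton'.mpr ⟨cheb K (m + 1) + cheb K m, ?_⟩
  rw [show 2 * (m + 1) = m + m + 2 by ring, cheb_add_add_two]
  ring

theorem cheb_two_mul_sum_cheb_even {c c' : ℕ → K} (hc'₀ : c' 0 = c 1)
    (hc' : ∀ j, c' (j + 1) = c j + c (j + 1) + c (j + 2)) (m : ℕ) :
    cheb K 2 * ∑ j ∈ range (m + 1), C (c j) * cheb K (2 * j)
      = ∑ j ∈ range (m + 1), C (c' j) * cheb K (2 * j)
        + (C (c m) * cheb K (2 * (m + 1)) - C (c (m + 1)) * cheb K (2 * m)) :=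
  mul_sum_range_succ_of_three_term (f := fun j => cheb K (2 * j)) (c := fun j => C (c j))
    (c' := fun j => C (c' j)) (by rw [Nat.mul_zero, cheb_zero, mul_one])
    cheb_two_mul_cheb_even_succ (congrArg C hc'₀) (fun j => by rw [hc', map_add, map_add]) m

end Chebyshev

section Entries

variable {R : Type*} [CommRing R]

def hatKEntry (R : Type*) [CommRing R] (d i j : ℕ) : R :=
  (-1) ^ (i + j) * ((d : R) - (max i j : ℕ))

theorem hatKEntry_comm (d i j : ℕ) : hatKEntry R d i j = hatKEntry R d j i := by
  rw [hatKEntry, hatKEntry, add_comm, max_comm]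

theorem hatKEntry_eq_zero_of_le (d i : ℕ) (hi : i ≤ d) : hatKEntry R d i d = 0 := by
  rw [hatKEntry, max_eq_right hi, sub_self, mul_zero]

theorem hatKEntry_add_hatKEntry_add_two (d t j : ℕ) :
    hatKEntry R d (t + 1) j + hatKEntry R d (t + 1) (j + 2)
      = hatKEntry R d (t + 2) (j + 1) + hatKEntry R d t (j + 1) := by
  have h : max (t + 1) j + max (t + 1) (j + 2) = max (t + 2) (j + 1) + max t (j + 1) := by omega
  have h' := congrArg (Nat.cast : ℕ → R) h
  push_cast at h'
  simp only [hatKEntry]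
  linear_combination (-1 : R) ^ (t + j) * h'

theorem hatKEntry_succ_one (d t : ℕ) :
    hatKEntry R d (t + 1) 1
      = hatKEntry R d (t + 2) 0 + hatKEntry R d (t + 1) 0 + hatKEntry R d t 0 := by
  simp only [hatKEntry, max_eq_left (Nat.le_add_left 1 t), Nat.max_zero]
  push_cast
  ring

theorem hatKEntry_zero_add_hatKEntry_zero (d j : ℕ) :
    hatKEntry R d 0 j + hatKEntry R d 0 (j + 1) + hatKEntry R d 0 (j + 2)
      = hatKEntry R d 1 (j + 1) := by
  simp only [hatKEntry, Nat.zero_max, max_eq_right (Nat.le_add_left 1 j)]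
  push_cast
  ring

end Entries

section Rows

variable {K : Type*} [Field K]

noncomputable def hatKRow (K : Type*) [Field K] (d i : ℕ) : K[X] :=
  ∑ j ∈ range d, C (hatKEntry K d i j) * cheb K (2 * j)

theorem hatKRow_zero (d : ℕ) :
    hatKRow K d 0 = ∑ n ∈ range d, C ((-1 : K) ^ n * ((d : K) - n)) * cheb K (2 * n) := by
  simp only [hatKRow, hatKEntry, zero_add, Nat.zero_max]

theorem cheb_two_mul_hatKRow_zero (m : ℕ) :
    cheb K 2 * hatKRow K (m + 1) 0
      = hatKRow K (m + 1) 1 + C (hatKEntry K (m + 1) 0 m) * cheb K (2 * (m + 1)) := by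
  rw [hatKRow, cheb_two_mul_sum_cheb_even (hatKEntry_comm _ _ _)
      (fun j => (hatKEntry_zero_add_hatKEntry_zero _ j).symm),
    hatKEntry_eq_zero_of_le _ _ (Nat.zero_le _), hatKRow]
  simp

theorem cheb_two_mul_hatKRow_succ (m t : ℕ) (ht : t ≤ m) :
    cheb K 2 * hatKRow K (m + 1) (t + 1)
      = hatKRow K (m + 1) (t + 2) + hatKRow K (m + 1) (t + 1) + hatKRow K (m + 1) t
        + C (hatKEntry K (m + 1) (t + 1) m) * cheb K (2 * (m + 1)) := by
  rw [hatKRow, cheb_two_mul_sum_cheb_even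
      (c' := fun j => hatKEntry K (m + 1) (t + 2) j + hatKEntry K (m + 1) (t + 1) j
        + hatKEntry K (m + 1) t j)
      (hatKEntry_succ_one _ _).symm
      (fun j => by linear_combination (hatKEntry_add_hatKEntry_add_two (R := K) _ t j).symm),
    hatKEntry_eq_zero_of_le _ _ (by omega)]
  simp only [hatKRow, map_add, add_mul, sum_add_distrib, map_zero, zero_mul, sub_zero]

theorem hatKRow_zero_mul_cheb_sub_mem_span (m t : ℕ) (ht : t ≤ m) :
    hatKRow K (m + 1) 0 * cheb K (2 * t) - hatKRow K (m + 1) t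
      ∈ Ideal.span {cheb K (m + 1) - cheb K m} := by
  have hI := cheb_even_succ_mem_span (K := K) m
  induction t using Nat.twoStepInduction with
  | zero => simp [cheb_zero]
  | one =>
    rw [mul_comm, cheb_two_mul_hatKRow_zero, add_sub_cancel_left]
    exact Ideal.mul_mem_left _ _ hI
  | more t ih ih' =>
    have key : hatKRow K (m + 1) 0 * cheb K (2 * (t + 2)) - hatKRow K (m + 1) (t + 2)
        = (cheb K 2 - 1) * (hatKRow K (m + 1) 0 * cheb K (2 * (t + 1)) - hatKRow K (m + 1) (t + 1))
          - (hatKRow K (m + 1) 0 * cheb K (2 * t) - hatKRow K (m + 1) t)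
          + C (hatKEntry K (m + 1) (t + 1) m) * cheb K (2 * (m + 1)) := by
      linear_combination cheb_two_mul_hatKRow_succ (K := K) m t (by omega)
        - hatKRow K (m + 1) 0 * cheb_two_mul_cheb_even_succ (K := K) t
    rw [key]
    exact Ideal.add_mem _
      (Ideal.sub_mem _ (Ideal.mul_mem_left _ _ (ih' (by omega))) (ih (by omega)))
      (Ideal.mul_mem_left _ _ hI)

end Rows

theorem hatK_matrix_general (d : ℕ) (i : ℕ) (hi : i < d) :
    letI K := CyclotomicField (2 * d + 1) ℚ
    letI mk := Ideal.Quotient.mk (Ideal.span {cheb K d - cheb K (d - 1)})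
    mk (∑ n ∈ Finset.range d,
          Polynomial.C ((-1 : K) ^ n * ((d : K) - n)) * cheb K (2 * n))
        * mk (cheb K (2 * i))
      = mk (∑ j ∈ Finset.range d,
          Polynomial.C ((-1 : K) ^ (i + j) * ((d : K) - (max i j : ℕ))) * cheb K (2 * j)) := by
  obtain ⟨m, rfl⟩ : ∃ m, d = m + 1 := ⟨d - 1, by omega⟩
  rw [← hatKRow_zero, ← map_mul, Nat.add_sub_cancel, Ideal.Quotient.eq]
  exact hatKRow_zero_mul_cheb_sub_mem_span m i (by omega)

/-- In the Verlinde algebra `V_p = ℚ(ζ_p)[z]/(e_d - e_{d-1})`, `p = 2d+1`, the matrix of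
multiplication by `K̂ = ∑_{n=0}^{d-1} (-1)^n (d-n) e_{2n}` in the basis
`{e_0, e_2, …, e_{2d-2}}` has entries `M_{ji} = (-1)^{i+j}(d - max i j)`, i.e.
`K̂ · e_{2i} = ∑_{j=0}^{d-1} (-1)^{i+j}(d - max i j) e_{2j}`. -/
theorem hatK_matrix (d : ℕ) (hd : 1 ≤ d) (i : ℕ) (hi : i < d) :
    letI K := CyclotomicField (2 * d + 1) ℚ
    letI mk := Ideal.Quotient.mk (Ideal.span {cheb K d - cheb K (d - 1)})
    mk (∑ n ∈ Finset.range d,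
          Polynomial.C ((-1 : K) ^ n * ((d : K) - n)) * cheb K (2 * n))
        * mk (cheb K (2 * i))
      = mk (∑ j ∈ Finset.range d,
          Polynomial.C ((-1 : K) ^ (i + j) * ((d : K) - (max i j : ℕ))) * cheb K (2 * j)) :=
  hatK_matrix_general d i hi
end

section
/- Let p = 2d+1 >= 5 be prime. For each g >= 1 and 0 <= c <= d-1 one has the closed formula (-1)^c delta_g^{(2c)} = (4/p) sum_{j=1}^{(p-1)/2} sin(pi j (2c+1)/p) sin(pi j / p) Lambda_j^g, where Lambda_j = ceil((p-1)/4) + 2 sum_{k=1}^{(p-3)/2} (-1)^k ceil((p-2k-1)/4) cos(2 k j pi / p), and delta_g^{(2c)} is defined by delta_1^{(2c)} = d-c and delta_{g+1}^{(2c)} = sum_{a=0}^{d-1}(d - max(a,c)) delta_g^{(2a)}. -/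
/-!
Put `θ_j = π j / p` for `1 ≤ j ≤ d`. The kernel `d - max a c` on `{0, …, d - 1}` is the Green
function of a second difference operator, which multiplies `a ↦ (-1)^a sin((2a + 1)θ)` by
`4 cos² θ` up to a boundary term in `sin((2d + 1)θ)`; at `θ = θ_j` that term vanishes, so these
vectors are eigenvectors of the kernel with eigenvalue `(4 cos² θ_j)⁻¹`. The ceiling sum `Λ_j`
is that eigenvalue: viewed as a function `Λ_d(θ)`, both `Λ_d(θ) · 4 cos² θ · sin θ` and
`sin θ - (-1)^d sin((2d + 1)θ)` obey the same two-step recursion in `d`. Finally `δ_0` is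
expanded in the eigenvectors by discrete sine orthogonality (a Dirichlet kernel computation),
and iterating the recursion raises each eigenvalue to the power `g`.
-/

open Real

open Finset

theorem eq_sum_mul_pow_mul_of_eigenvectors {ι R : Type*} [CommSemiring R] (s : Finset ι) (n : ℕ)
    (K : ℕ → ℕ → R) (x : ℕ → ℕ → R) (u : ι → ℕ → R) (μ w : ι → R)
    (hx : ∀ g, ∀ c < n, x (g + 1) c = ∑ a ∈ range n, K c a * x g a)
    (hu : ∀ j ∈ s, ∀ c < n, ∑ a ∈ range n, K c a * u j a = μ j * u j c)
    (h0 : ∀ c < n, x 0 c = ∑ j ∈ s, w j * u j c) (g : ℕ) :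
    ∀ c < n, x g c = ∑ j ∈ s, w j * μ j ^ g * u j c := by
  induction g with
  | zero => simpa using h0
  | succ g ih =>
    intro c hc
    calc x (g + 1) c = ∑ a ∈ range n, K c a * ∑ j ∈ s, w j * μ j ^ g * u j a := by
          rw [hx g c hc]
          exact sum_congr rfl fun a ha => by rw [ih a (mem_range.1 ha)]
      _ = ∑ j ∈ s, w j * μ j ^ g * ∑ a ∈ range n, K c a * u j a := by
          simp only [mul_sum]
          rw [sum_comm]
          exact sum_congr rfl fun j _ => sum_congr rfl fun a _ => by ring
      _ = ∑ j ∈ s, w j * μ j ^ (g + 1) * u j c :=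
          sum_congr rfl fun j hj => by rw [hu j hj c hc]; ring

theorem sin_mul_one_add_two_mul_sum_cos (θ : ℝ) (n : ℕ) :
    sin θ * (1 + 2 * ∑ k ∈ Icc 1 n, cos (2 * k * θ)) = sin ((2 * n + 1) * θ) := by
  induction n with
  | zero => simp
  | succ n ih =>
    rw [sum_Icc_succ_top (by omega), mul_add 2, ← add_assoc, mul_add, ih]
    have := two_mul_sin_mul_cos θ (2 * (n + 1 : ℕ) * θ)
    push_cast at this ⊢
    linear_combination (norm := ring_nf) this + sin_neg ((2 * n + 1) * θ)

theorem cos_mul_one_add_two_mul_sum_neg_one_pow_mul_cos (θ : ℝ) (n : ℕ) :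
    cos θ * (1 + 2 * ∑ k ∈ Icc 1 n, (-1) ^ k * cos (2 * k * θ))
      = (-1) ^ n * cos ((2 * n + 1) * θ) := by
  induction n with
  | zero => simp
  | succ n ih =>
    rw [sum_Icc_succ_top (by omega), mul_add 2, ← add_assoc, mul_add, ih]
    have := two_mul_cos_mul_cos θ (2 * (n + 1 : ℕ) * θ)
    push_cast at this ⊢
    linear_combination (norm := ring_nf) (-1) ^ (n + 1) * (this + cos_neg ((2 * n + 1) * θ))

theorem two_mul_cos_mul_sum_neg_one_pow_mul_sin (θ : ℝ) (n : ℕ) :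
    2 * cos θ * ∑ a ∈ range n, (-1) ^ a * sin ((2 * a + 1) * θ)
      = -((-1) ^ n * sin (2 * n * θ)) := by
  induction n with
  | zero => simp
  | succ n ih =>
    rw [sum_range_succ, mul_add, ih]
    have := two_mul_sin_mul_cos ((2 * n + 1) * θ) θ
    push_cast
    linear_combination (norm := ring_nf) (-1) ^ n * this

theorem sum_sub_max_mul_neg_one_pow_mul_sin_mul_four_mul_cos_sq (θ : ℝ) {c d : ℕ} (hcd : c ≤ d) :
    (∑ a ∈ range d, ((d : ℝ) - (max a c : ℕ)) * ((-1) ^ a * sin ((2 * a + 1) * θ)))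
        * (4 * cos θ ^ 2)
      = (-1) ^ c * sin ((2 * c + 1) * θ) - (-1) ^ d * sin ((2 * d + 1) * θ) := by
  induction d, hcd using Nat.le_induction with
  | base =>
    rw [sum_eq_zero fun a ha => by rw [max_eq_right (mem_range.1 ha).le, sub_self, zero_mul]]
    ring
  | succ d hcd ih =>
    have hsplit : ∑ a ∈ range (d + 1), (((d + 1 : ℕ) : ℝ) - (max a c : ℕ))
          * ((-1) ^ a * sin ((2 * a + 1) * θ))
        = ∑ a ∈ range d, ((d : ℝ) - (max a c : ℕ)) * ((-1) ^ a * sin ((2 * a + 1) * θ))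
          + ∑ a ∈ range (d + 1), (-1) ^ a * sin ((2 * a + 1) * θ) := by
      rw [sum_range_succ, max_eq_left hcd, sum_range_succ _ d, ← add_assoc, ← sum_add_distrib]
      push_cast
      congr 1
      · exact sum_congr rfl fun a _ => by ring
      · ring
    have htel := two_mul_cos_mul_sum_neg_one_pow_mul_sin θ (d + 1)
    have hprod := two_mul_sin_mul_cos (2 * (d + 1 : ℕ) * θ) θ
    rw [hsplit, add_mul, ih]
    push_cast at htel hprod ⊢
    linear_combination (norm := ring_nf) 2 * cos θ * htel + (-1) ^ d * hprod

/-- The ceiling sum `Λ_j` of the statement, written in `d = (p - 1) / 2` and `θ = π j / p`. -/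
noncomputable def verlindeEigenvalue (d : ℕ) (θ : ℝ) : ℝ :=
  (⌈(d : ℚ) / 2⌉ : ℝ)
    + 2 * ∑ k ∈ Icc 1 (d - 1), (-1) ^ k * (⌈((d : ℚ) - k) / 2⌉ : ℝ) * cos (2 * k * θ)

theorem verlindeEigenvalue_add_two (d : ℕ) (θ : ℝ) :
    verlindeEigenvalue (d + 2) θ
      = verlindeEigenvalue d θ + (1 + 2 * ∑ k ∈ Icc 1 (d + 1), (-1) ^ k * cos (2 * k * θ)) := by
  have hceil (x : ℚ) : ⌈(x + 2) / 2⌉ = ⌈x / 2⌉ + 1 := by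
    rw [add_div, div_self two_ne_zero, Int.ceil_add_one]
  have hceil0 : ⌈((d + 2 : ℕ) : ℚ) / 2⌉ = ⌈(d : ℚ) / 2⌉ + 1 := by push_cast; exact hceil _
  have hceilk (k : ℕ) : ⌈(((d + 2 : ℕ) : ℚ) - k) / 2⌉ = ⌈((d : ℚ) - k) / 2⌉ + 1 := by
    rw [← hceil]; push_cast; ring_nf
  have hvanish : ∑ k ∈ Icc 1 (d - 1), (-1) ^ k * (⌈((d : ℚ) - k) / 2⌉ : ℝ) * cos (2 * k * θ)
      = ∑ k ∈ Icc 1 (d + 1), (-1) ^ k * (⌈((d : ℚ) - k) / 2⌉ : ℝ) * cos (2 * k * θ) := by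
    refine sum_subset (Icc_subset_Icc_right (by omega)) fun k hk hk' => ?_
    simp only [mem_Icc] at hk hk'
    have hk₁ : (k : ℚ) ≤ d + 1 := by exact_mod_cast hk.2
    have hk₂ : (d : ℚ) ≤ k := by exact_mod_cast (show d ≤ k by omega)
    rw [Int.ceil_eq_zero_iff.2 ⟨by linarith, by linarith⟩, Int.cast_zero, mul_zero, zero_mul]
  unfold verlindeEigenvalue
  rw [show d + 2 - 1 = d + 1 by omega, hvanish]
  simp only [hceil0, hceilk]
  push_cast
  simp only [mul_add, add_mul, mul_one, sum_add_distrib]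
  ring

theorem verlindeEigenvalue_mul_four_mul_cos_sq_mul_sin (d : ℕ) (θ : ℝ) :
    verlindeEigenvalue d θ * (4 * cos θ ^ 2) * sin θ
      = sin θ - (-1) ^ d * sin ((2 * d + 1) * θ) := by
  induction d using Nat.twoStepInduction with
  | zero => simp [verlindeEigenvalue]
  | one =>
    have hceil : ⌈(1 : ℚ) / 2⌉ = 1 := Int.ceil_eq_iff.2 ⟨by norm_num, by norm_num⟩
    simp only [verlindeEigenvalue, Nat.cast_one, hceil, Nat.sub_self, Icc_eq_empty_of_lt one_pos]
    rw [show (2 * 1 + 1) * θ = 3 * θ by ring, sin_three_mul, cos_sq']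
    simp only [Int.cast_one, sum_empty, mul_zero, add_zero]
    ring
  | more d ih _ =>
    have hA := cos_mul_one_add_two_mul_sum_neg_one_pow_mul_cos θ (d + 1)
    have hprod := two_mul_sin_mul_cos (2 * θ) ((2 * (d + 1 : ℕ) + 1) * θ)
    rw [verlindeEigenvalue_add_two, add_mul, add_mul, ih]
    rw [sin_two_mul] at hprod
    push_cast at hA hprod ⊢
    linear_combination (norm := ring_nf) 4 * sin θ * cos θ * hA + (-1) ^ (d + 1) * hprod
      - (-1) ^ d * sin_neg ((2 * d + 1) * θ)

section

variable {p d j : ℕ}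

theorem sin_pi_mul_div_ne_zero (hj : 0 < j) (hjp : j < p) : sin (π * j / p) ≠ 0 := by
  have hp : (0 : ℝ) < p := by exact_mod_cast hj.trans hjp
  refine (sin_pos_of_pos_of_lt_pi (by positivity) ?_).ne'
  rw [div_lt_iff₀ hp, mul_lt_mul_iff_right₀ pi_pos]
  exact_mod_cast hjp

theorem sin_mul_pi_mul_div_eq_zero (hpd : p = 2 * d + 1) : sin ((2 * d + 1) * (π * j / p)) = 0 := by
  have harg : (2 * d + 1 : ℝ) * (π * j / p) = j * π := by
    subst hpd
    push_cast
    field_simp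
  rw [harg, sin_nat_mul_pi]

theorem sum_Icc_cos_two_mul_pi_mul_div (hpd : p = 2 * d + 1) (hj : 0 < j) (hjp : j < p) :
    ∑ k ∈ Icc 1 d, cos (2 * k * (π * j / p)) = -1 / 2 := by
  have h := sin_mul_one_add_two_mul_sum_cos (π * j / p) d
  rw [sin_mul_pi_mul_div_eq_zero hpd, mul_eq_zero] at h
  have := h.resolve_left (sin_pi_mul_div_ne_zero hj hjp)
  linarith

theorem verlindeEigenvalue_mul_four_mul_cos_sq (hpd : p = 2 * d + 1) (hj : 0 < j) (hjp : j < p) :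
    verlindeEigenvalue d (π * j / p) * (4 * cos (π * j / p) ^ 2) = 1 := by
  have h := verlindeEigenvalue_mul_four_mul_cos_sq_mul_sin d (π * j / p)
  rw [sin_mul_pi_mul_div_eq_zero hpd, mul_zero, sub_zero] at h
  exact (mul_eq_right₀ (sin_pi_mul_div_ne_zero hj hjp)).1 h

theorem sum_sub_max_mul_neg_one_pow_mul_sin_eq {c : ℕ} (hpd : p = 2 * d + 1) (hj : 0 < j)
    (hjp : j < p) (hcd : c ≤ d) :
    ∑ a ∈ range d, ((d : ℝ) - (max a c : ℕ)) * ((-1) ^ a * sin ((2 * a + 1) * (π * j / p)))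
      = verlindeEigenvalue d (π * j / p) * ((-1) ^ c * sin ((2 * c + 1) * (π * j / p))) := by
  have hgreen := sum_sub_max_mul_neg_one_pow_mul_sin_mul_four_mul_cos_sq (π * j / p) hcd
  rw [sin_mul_pi_mul_div_eq_zero hpd, mul_zero, sub_zero] at hgreen
  have hΛ := verlindeEigenvalue_mul_four_mul_cos_sq hpd hj hjp
  linear_combination verlindeEigenvalue d (π * j / p) * hgreen
    - (∑ a ∈ range d, ((d : ℝ) - (max a c : ℕ)) * ((-1) ^ a * sin ((2 * a + 1) * (π * j / p)))) * hΛ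

theorem sum_Icc_sin_mul_sin {c : ℕ} (hpd : p = 2 * d + 1) (hc : c < d) :
    ∑ j ∈ Icc 1 d, sin ((2 * c + 1) * (π * j / p)) * sin (π * j / p)
      = if c = 0 then (p : ℝ) / 4 else 0 := by
  have hcos (m : ℕ) : ∑ j ∈ Icc 1 d, cos (2 * m * (π * j / p))
      = ∑ j ∈ Icc 1 d, cos (2 * j * (π * m / p)) :=
    sum_congr rfl fun j _ => by ring_nf
  have hprod (j : ℕ) : sin ((2 * c + 1) * (π * j / p)) * sin (π * j / p)
      = (cos (2 * c * (π * j / p)) - cos (2 * (c + 1 : ℕ) * (π * j / p))) / 2 := by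
    rw [eq_div_iff two_ne_zero, mul_comm _ (2 : ℝ), ← mul_assoc, two_mul_sin_mul_sin]
    push_cast
    ring_nf
  simp only [hprod, ← sum_div, sum_sub_distrib, hcos]
  rw [sum_Icc_cos_two_mul_pi_mul_div hpd (Nat.succ_pos c) (by omega)]
  split_ifs with hc0
  · simp only [hc0, Nat.cast_zero, mul_zero, zero_div, cos_zero, sum_const, Nat.card_Icc,
      add_tsub_cancel_right, nsmul_eq_mul, mul_one, hpd]
    push_cast
    ring
  · rw [sum_Icc_cos_two_mul_pi_mul_div hpd (Nat.pos_of_ne_zero hc0) (by omega)]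
    ring

theorem delta_zero_eq_sum {c : ℕ} (hpd : p = 2 * d + 1) (hc : c < d) :
    ((delta d 0 c : ℚ) : ℝ)
      = ∑ j ∈ Icc 1 d, 4 / p * sin (π * j / p) * ((-1) ^ c * sin ((2 * c + 1) * (π * j / p))) := by
  have hp : (p : ℝ) ≠ 0 := by rw [hpd]; positivity
  rw [show ∑ j ∈ Icc 1 d, 4 / p * sin (π * j / p) * ((-1) ^ c * sin ((2 * c + 1) * (π * j / p)))
      = 4 / p * (-1) ^ c * ∑ j ∈ Icc 1 d, sin ((2 * c + 1) * (π * j / p)) * sin (π * j / p) by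
    rw [mul_sum]; exact sum_congr rfl fun _ _ => by ring, sum_Icc_sin_mul_sin hpd hc]
  split_ifs with hc0
  · simp only [delta, hc0, ↓reduceIte, Rat.cast_one, pow_zero, mul_one]
    field_simp
  · simp [delta, hc0]

theorem ceil_sum_eq_verlindeEigenvalue (hpd : p = 2 * d + 1) :
    (⌈((p : ℚ) - 1) / 4⌉ : ℝ) + 2 * ∑ k ∈ Icc 1 (d - 1),
        (-1 : ℝ) ^ k * (⌈((p : ℚ) - 2 * k - 1) / 4⌉ : ℝ) * cos (2 * k * j * π / p)
      = verlindeEigenvalue d (π * j / p) := by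
  subst hpd
  rw [verlindeEigenvalue]
  push_cast
  rw [show (2 * (d : ℚ) + 1 - 1) / 4 = d / 2 by ring]
  congr 2
  refine sum_congr rfl fun k _ => ?_
  rw [show (2 * (d : ℚ) + 1 - 2 * k - 1) / 4 = (d - k) / 2 by ring,
    show 2 * (k : ℝ) * j * π / (2 * d + 1) = 2 * k * (π * j / (2 * d + 1)) by ring]

end

theorem delta_closed_formula_general (p d : ℕ) (hpd : p = 2 * d + 1)
    (g c : ℕ) (hc : c < d) :
    (-1 : ℝ) ^ c * ((delta d g c : ℚ) : ℝ)
      = 4 / p * ∑ j ∈ Finset.Icc 1 ((p - 1) / 2),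
          Real.sin (π * j * (2 * c + 1) / p) * Real.sin (π * j / p) *
            ((⌈((p : ℚ) - 1) / 4⌉ : ℝ)
              + 2 * ∑ k ∈ Finset.Icc 1 ((p - 3) / 2),
                  (-1 : ℝ) ^ k * (⌈((p : ℚ) - 2 * k - 1) / 4⌉ : ℝ)
                    * Real.cos (2 * k * j * π / p)) ^ g := by
  have hj : ∀ j ∈ Icc 1 d, 0 < j ∧ j < p := fun j hj => by rw [mem_Icc] at hj; omega
  have hexpand := eq_sum_mul_pow_mul_of_eigenvectors (Icc 1 d) d
    (fun c a => (d : ℝ) - (max a c : ℕ)) (fun g c => ((delta d g c : ℚ) : ℝ))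
    (fun j a => (-1) ^ a * sin ((2 * a + 1) * (π * j / p)))
    (fun j => verlindeEigenvalue d (π * j / p)) (fun j => 4 / p * sin (π * j / p))
    (fun g c _ => by simp only [delta]; push_cast; rfl)
    (fun j hjs c hc => sum_sub_max_mul_neg_one_pow_mul_sin_eq hpd (hj j hjs).1 (hj j hjs).2 hc.le)
    (fun c hc => delta_zero_eq_sum hpd hc) g c hc
  have hsq : ((-1 : ℝ) ^ c) ^ 2 = 1 := by rw [← pow_mul, pow_mul']; simp
  rw [show (p - 1) / 2 = d by omega, show (p - 3) / 2 = d - 1 by omega, hexpand, mul_sum, mul_sum]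
  refine sum_congr rfl fun j _ => ?_
  rw [ceil_sum_eq_verlindeEigenvalue hpd]
  linear_combination (norm := ring_nf)
    4 / p * sin (π * j / p) * verlindeEigenvalue d (π * j / p) ^ g
      * sin ((2 * c + 1) * (π * j / p)) * hsq

/-- Verlinde-type formula:
`(-1)^c δ_g^{(2c)} = (4/p) ∑_{j=1}^{(p-1)/2} sin(πj(2c+1)/p) sin(πj/p) Λ_j^g` with
`Λ_j = ⌈(p-1)/4⌉ + 2 ∑_{k=1}^{(p-3)/2} (-1)^k ⌈(p-2k-1)/4⌉ cos(2kjπ/p)`. -/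
theorem delta_closed_formula (p d : ℕ) (hp : p.Prime) (hp5 : 5 ≤ p) (hpd : p = 2 * d + 1)
    (g c : ℕ) (hg : 1 ≤ g) (hc : c < d) :
    (-1 : ℝ) ^ c * ((delta d g c : ℚ) : ℝ)
      = 4 / p * ∑ j ∈ Finset.Icc 1 ((p - 1) / 2),
          Real.sin (π * j * (2 * c + 1) / p) * Real.sin (π * j / p) *
            ((⌈((p : ℚ) - 1) / 4⌉ : ℝ)
              + 2 * ∑ k ∈ Finset.Icc 1 ((p - 3) / 2),
                  (-1 : ℝ) ^ k * (⌈((p : ℚ) - 2 * k - 1) / 4⌉ : ℝ)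
                    * Real.cos (2 * k * j * π / p)) ^ g :=
  delta_closed_formula_general p d hpd g c hc
end
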